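/- arXiv:1812.01109 — 2 statements merged into one kernel-verified Lean document; each statement's English description precedes it below -/
import Mathlib

section
/- For positive integers a, b, c with a odd, and any nonnegative integer n: t(a,7a,2b,2c; 2n+a) = t(a,7a,b,c;n), t(a,7a,8b,8c; 8n+10a) = 2*t(4a,7a,b,c;n), and t(a,7a,8b,8c; 8n+28a) = 2*t(a,28a,b,c;n). -/
/-- Number of representations of `n` by `a x² + b y² + c z² + d w²` over ℤ. -/
noncomputable def N4 (a b c d n : ℤ) : ℕ :=
  Set.ncard {v : ℤ × ℤ × ℤ × ℤ |
    n = a * v.1 ^ 2 + b * v.2.1 ^ 2 + c * v.2.2.1 ^ 2 + d * v.2.2.2 ^ 2}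

/-- Number of representations of `n` by `a x(x-1)/2 + b y(y-1)/2 + c z(z-1)/2 + d w(w-1)/2`. -/
noncomputable def t4 (a b c d n : ℤ) : ℕ :=
  Set.ncard {v : ℤ × ℤ × ℤ × ℤ |
    2 * n = a * (v.1 * (v.1 - 1)) + b * (v.2.1 * (v.2.1 - 1))
      + c * (v.2.2.1 * (v.2.2.1 - 1)) + d * (v.2.2.2 * (v.2.2.2 - 1))}

lemma tri_nonneg (x : ℤ) : 0 ≤ x * (x - 1) := by
  rcases le_or_gt 1 x with h | h
  · exact mul_nonneg (by omega) (by omega)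
  · have h1 : x ≤ 0 := by omega
    nlinarith

lemma tri_even (x : ℤ) : ∃ m, x * (x - 1) = 2 * m := by
  obtain ⟨m, hm⟩ := Int.even_mul_pred_self x
  exact ⟨m, by linarith⟩

lemma tri_bound {q m : ℤ} (hm : 0 ≤ m) (h : q * (q - 1) ≤ m) :
    -(m + 2) ≤ q ∧ q ≤ m + 2 := by
  constructor
  · by_contra hq
    push_neg at hq
    have h1 : (0:ℤ) ≤ (-q - m - 2) * (-q + 1) :=
      mul_nonneg (by omega) (by omega)
    nlinarith
  · by_contra hq
    push_neg at hq
    have h1 : (0:ℤ) ≤ (q - m - 2) * (q - 1) :=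
      mul_nonneg (by omega) (by omega)
    nlinarith

lemma odd_cancel2 {a k : ℤ} (ha : Odd a) (h : (2:ℤ) ∣ a * k) : (2:ℤ) ∣ k := by
  rcases Int.even_or_odd k with he | ho
  · exact he.two_dvd
  · exfalso
    have := Int.odd_iff.mp (ha.mul ho)
    omega

lemma odd_cancel_pow {a : ℤ} (ha : Odd a) :
    ∀ (i : ℕ) (k : ℤ), (2 ^ i : ℤ) ∣ a * k → (2 ^ i : ℤ) ∣ k := by
  intro i
  induction i with
  | zero => intro k _; simpa using one_dvd k
  | succ i ih =>
    intro k h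
    have h2 : (2:ℤ) ∣ a * k := dvd_trans ⟨2 ^ i, by ring⟩ h
    obtain ⟨k', rfl⟩ := odd_cancel2 ha h2
    obtain ⟨c, hc⟩ := h
    rw [pow_succ] at hc
    have hak : a * k' = 2 ^ i * c := by
      have h2' : (2:ℤ) * (a * k') = 2 * (2 ^ i * c) := by linarith
      exact mul_left_cancel₀ two_ne_zero h2'
    obtain ⟨d, hd⟩ := ih k' ⟨c, hak⟩
    exact ⟨d, by rw [hd, pow_succ]; ring⟩

lemma odd_cancel16 {a k : ℤ} (ha : Odd a) (h : (16:ℤ) ∣ a * k) : (16:ℤ) ∣ k := by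
  have h' : (2 ^ 4 : ℤ) ∣ a * k := by norm_num; exact h
  have := odd_cancel_pow ha 4 k h'
  norm_num at this; exact this

lemma odd_cancel64 {a k : ℤ} (ha : Odd a) (h : (64:ℤ) ∣ a * k) : (64:ℤ) ∣ k := by
  have h' : (2 ^ 6 : ℤ) ∣ a * k := by norm_num; exact h
  have := odd_cancel_pow ha 6 k h'
  norm_num at this; exact this

lemma sol_finite (A B C D N : ℤ) (hA : 0 < A) (hB : 0 < B) (hC : 0 < C) (hD : 0 < D) :
    {v : ℤ × ℤ × ℤ × ℤ | 2 * N = A * (v.1 * (v.1 - 1)) + B * (v.2.1 * (v.2.1 - 1))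
      + C * (v.2.2.1 * (v.2.2.1 - 1)) + D * (v.2.2.2 * (v.2.2.2 - 1))}.Finite := by
  set K : ℤ := 2 * |N| + 2 with hK
  apply Set.Finite.subset
    ((Set.finite_Icc (-K) K).prod ((Set.finite_Icc (-K) K).prod
      ((Set.finite_Icc (-K) K).prod (Set.finite_Icc (-K) K))))
  rintro ⟨x, y, z, w⟩ h
  simp only [Set.mem_setOf_eq] at h
  have hNa : (0:ℤ) ≤ 2 * |N| := by positivity
  have hN2 : (2:ℤ) * N ≤ 2 * |N| := by
    have := le_abs_self N; omega
  have hx0 := tri_nonneg x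
  have hy0 := tri_nonneg y
  have hz0 := tri_nonneg z
  have hw0 := tri_nonneg w
  have hAx : 0 ≤ A * (x * (x - 1)) := mul_nonneg hA.le hx0
  have hBy : 0 ≤ B * (y * (y - 1)) := mul_nonneg hB.le hy0
  have hCz : 0 ≤ C * (z * (z - 1)) := mul_nonneg hC.le hz0
  have hDw : 0 ≤ D * (w * (w - 1)) := mul_nonneg hD.le hw0
  have bx : x * (x - 1) ≤ 2 * |N| := by nlinarith [le_mul_of_one_le_left hx0 (by omega : (1:ℤ) ≤ A)]
  have by' : y * (y - 1) ≤ 2 * |N| := by nlinarith [le_mul_of_one_le_left hy0 (by omega : (1:ℤ) ≤ B)]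
  have bz : z * (z - 1) ≤ 2 * |N| := by nlinarith [le_mul_of_one_le_left hz0 (by omega : (1:ℤ) ≤ C)]
  have bw : w * (w - 1) ≤ 2 * |N| := by nlinarith [le_mul_of_one_le_left hw0 (by omega : (1:ℤ) ≤ D)]
  obtain ⟨bx1, bx2⟩ := tri_bound hNa bx
  obtain ⟨by1, by2⟩ := tri_bound hNa by'
  obtain ⟨bz1, bz2⟩ := tri_bound hNa bz
  obtain ⟨bw1, bw2⟩ := tri_bound hNa bw
  simp only [Set.mem_prod, Set.mem_Icc]
  omega

lemma key1 {u v : ℤ} (hu : Odd u) (hv : Odd v) (h : (16:ℤ) ∣ (u^2 + 7*v^2)) :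
    (∃ s t : ℤ, Odd s ∧ Odd t ∧ 2*u = s - 7*t ∧ 2*v = s + t) ∨
    (∃ s t : ℤ, Odd s ∧ Odd t ∧ 2*u = s + 7*t ∧ 2*v = t - s) := by
  obtain ⟨k, hk⟩ := hu
  obtain ⟨l, hl⟩ := hv
  obtain ⟨m, hm⟩ : ∃ m, l * (l + 1) = 2 * m := by
    obtain ⟨m, hm⟩ := Int.even_mul_succ_self l
    exact ⟨m, by linarith⟩
  rcases Int.even_or_odd (k - l) with ⟨g, hg⟩ | ⟨g, hg⟩
  · -- k - l = g + g
    have hP : u^2 + 7*v^2 = 8*(g*(k+l+1)) + 64*m + 8 := by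
      linear_combination (u + 2*k + 1) * hk + 7*(v + 2*l + 1) * hl + (4*(k+l+1)) * hg + 32 * hm
    rw [hP] at h
    obtain ⟨G, hGdef⟩ : ∃ G, g*(k+l+1) = G := ⟨_, rfl⟩
    rw [hGdef] at h
    have hGodd : Odd G := by
      rcases Int.even_or_odd G with ⟨r, hr⟩ | ho
      · exfalso; omega
      · exact ho
    rw [← hGdef, Int.odd_mul] at hGodd
    obtain ⟨γ, hγ⟩ := hGodd.1
    left
    exact ⟨g + 2*(2*l+1), -g, ⟨γ + 2*l + 1, by omega⟩, ⟨-γ - 1, by omega⟩, by omega, by omega⟩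
  · -- k - l = 2*g + 1
    have hP : u^2 + 7*v^2 = 8*((k-l)*(g+l+1)) + 64*m + 8 := by
      linear_combination (u + 2*k + 1) * hk + 7*(v + 2*l + 1) * hl + (4*(k-l)) * hg + 32 * hm
    rw [hP] at h
    obtain ⟨G, hGdef⟩ : ∃ G, (k-l)*(g+l+1) = G := ⟨_, rfl⟩
    rw [hGdef] at h
    have hGodd : Odd G := by
      rcases Int.even_or_odd G with ⟨r, hr⟩ | ho
      · exfalso; omega
      · exact ho
    rw [← hGdef, Int.odd_mul] at hGodd
    obtain ⟨δ, hδ⟩ := hGodd.2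
    right
    exact ⟨(g+l+1) - 2*(2*l+1), g+l+1, ⟨δ - 2*l - 1, by omega⟩, ⟨δ, by omega⟩, by omega, by omega⟩

lemma key2 {u v : ℤ} (hu : Odd u) (hv : Odd v) (h : (64:ℤ) ∣ (u^2 + 7*v^2 - 24)) :
    (∃ s t : ℤ, Odd s ∧ Odd t ∧ u = 2*s + 7*t ∧ v = 2*s - t) ∨
    (∃ s t : ℤ, Odd s ∧ Odd t ∧ u = 2*s + 7*t ∧ v = t - 2*s) := by
  obtain ⟨k, hk⟩ := hu
  obtain ⟨l, hl⟩ := hv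
  obtain ⟨m, hm⟩ : ∃ m, l * (l + 1) = 2 * m := by
    obtain ⟨m, hm⟩ := Int.even_mul_succ_self l
    exact ⟨m, by linarith⟩
  rcases Int.even_or_odd (k - l) with ⟨g, hg⟩ | ⟨g, hg⟩
  · -- k - l = g + g ; e' = k+l+1 odd
    have he' : Odd (k+l+1) := ⟨(k+l)/2, by omega⟩
    have hP : u^2 + 7*v^2 - 24 = 8*(g*(k+l+1)) + 64*m - 16 := by
      linear_combination (u + 2*k + 1) * hk + 7*(v + 2*l + 1) * hl + (4*(k+l+1)) * hg + 32 * hm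
    rcases Int.even_or_odd g with ⟨h₁, hh₁⟩ | hgodd
    · -- g = h₁ + h₁
      have hP2 : u^2 + 7*v^2 - 24 = 16*(h₁*(k+l+1)) + 64*m - 16 := by
        linear_combination hP + (8*(k+l+1)) * hh₁
      rw [hP2] at h
      obtain ⟨H, hHdef⟩ : ∃ H, h₁*(k+l+1) = H := ⟨_, rfl⟩
      rw [hHdef] at h
      have hHodd : Odd H := by
        rcases Int.even_or_odd H with ⟨r, hr⟩ | ho
        · exfalso; omega
        · exact ho
      have hH1 : H % 4 = 1 := by
        obtain ⟨c, hc⟩ := h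
        omega
      rw [← hHdef, Int.odd_mul] at hHodd
      obtain ⟨α, hα⟩ := hHodd.1
      -- coupling: H = 4*(h₁*h₁) + 4*(α*l) + 2*α + 2*l + 1
      have hcoup : h₁*(k+l+1) = 4*(h₁*h₁) + 4*(α*l) + 2*α + 2*l + 1 := by
        linear_combination h₁ * hg + 2*h₁ * hh₁ + (2*l + 1) * hα
      rw [hHdef] at hcoup
      obtain ⟨Q1, hQ1⟩ : ∃ q, h₁*h₁ = q := ⟨_, rfl⟩
      obtain ⟨Q2, hQ2⟩ : ∃ q, α*l = q := ⟨_, rfl⟩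
      rw [hQ1, hQ2] at hcoup
      -- now α + l is even
      left
      refine ⟨α + l + 1, h₁, ⟨(α + l)/2, by omega⟩, ⟨α, hα⟩, by omega, by omega⟩
    · -- g odd : contradiction
      exfalso
      have : Odd (g*(k+l+1)) := hgodd.mul he'
      obtain ⟨r, hr⟩ := this
      rw [hP] at h
      obtain ⟨c, hc⟩ := h
      omega
  · -- k - l = 2g+1 ; e' = k+l+1 = 2*(g+l+1)
    have hd'odd : Odd (k - l) := ⟨g, hg⟩
    have hP : u^2 + 7*v^2 - 24 = 8*((k-l)*(g+l+1)) + 64*m - 16 := by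
      linear_combination (u + 2*k + 1) * hk + 7*(v + 2*l + 1) * hl + (4*(k-l)) * hg + 32 * hm
    rcases Int.even_or_odd (g+l+1) with ⟨h₁, hh₁⟩ | hgodd
    · -- g+l+1 = h₁ + h₁
      have hP2 : u^2 + 7*v^2 - 24 = 16*((k-l)*h₁) + 64*m - 16 := by
        linear_combination hP + (8*(k-l)) * hh₁
      rw [hP2] at h
      obtain ⟨H, hHdef⟩ : ∃ H, (k-l)*h₁ = H := ⟨_, rfl⟩
      rw [hHdef] at h
      have hHodd : Odd H := by
        rcases Int.even_or_odd H with ⟨r, hr⟩ | ho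
        · exfalso; omega
        · exact ho
      have hH1 : H % 4 = 1 := by
        obtain ⟨c, hc⟩ := h
        omega
      rw [← hHdef, Int.odd_mul] at hHodd
      obtain ⟨α, hα⟩ := hHodd.2
      -- coupling: (k-l)*h₁ with k-l = 4*h₁ - v = 4h₁ - 2l - 1
      have hcoup : (k-l)*h₁ = 4*(h₁*h₁) - 4*(α*l) - 2*α - 2*l - 1 := by
        linear_combination h₁ * hg + 2*h₁ * hh₁ - (2*l + 1) * hα
      rw [hHdef] at hcoup
      obtain ⟨Q1, hQ1⟩ : ∃ q, h₁*h₁ = q := ⟨_, rfl⟩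
      obtain ⟨Q2, hQ2⟩ : ∃ q, α*l = q := ⟨_, rfl⟩
      rw [hQ1, hQ2] at hcoup
      -- α + l odd
      right
      refine ⟨α - l, h₁, ⟨(α - l - 1)/2, by omega⟩, ⟨α, hα⟩, by omega, by omega⟩
    · -- g+l+1 odd : contradiction
      exfalso
      have : Odd ((k-l)*(g+l+1)) := hd'odd.mul hgodd
      obtain ⟨r, hr⟩ := this
      rw [hP] at h
      obtain ⟨c, hc⟩ := h
      omega

lemma key3 {u v : ℤ} (hu : Odd u) (hv : Odd v) (h : (64:ℤ) ∣ (u^2 + 7*v^2 - 40)) :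
    (∃ s t : ℤ, Odd s ∧ Odd t ∧ u = s - 14*t ∧ v = s + 2*t) ∨
    (∃ s t : ℤ, Odd s ∧ Odd t ∧ u = s - 14*t ∧ v = -s - 2*t) := by
  obtain ⟨k, hk⟩ := hu
  obtain ⟨l, hl⟩ := hv
  obtain ⟨m, hm⟩ : ∃ m, l * (l + 1) = 2 * m := by
    obtain ⟨m, hm⟩ := Int.even_mul_succ_self l
    exact ⟨m, by linarith⟩
  rcases Int.even_or_odd (k - l) with ⟨g, hg⟩ | ⟨g, hg⟩
  · -- k - l even; e' odd
    have he' : Odd (k+l+1) := ⟨(k+l)/2, by omega⟩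
    have hP : u^2 + 7*v^2 - 40 = 8*(g*(k+l+1)) + 64*m - 32 := by
      linear_combination (u + 2*k + 1) * hk + 7*(v + 2*l + 1) * hl + (4*(k+l+1)) * hg + 32 * hm
    rcases Int.even_or_odd g with ⟨h₁, hh₁⟩ | hgodd
    · rcases Int.even_or_odd h₁ with ⟨h₂, hh₂⟩ | h₁odd
      · -- g = 2h₁, h₁ = 2h₂ : u - v = 16 h₂
        have hP2 : u^2 + 7*v^2 - 40 = 32*(h₂*(k+l+1)) + 64*m - 32 := by
          linear_combination hP + (8*(k+l+1)) * hh₁ + (16*(k+l+1)) * hh₂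
        rw [hP2] at h
        obtain ⟨J, hJdef⟩ : ∃ J, h₂*(k+l+1) = J := ⟨_, rfl⟩
        rw [hJdef] at h
        have hJodd : Odd J := by
          rcases Int.even_or_odd J with ⟨r, hr⟩ | ho
          · exfalso; omega
          · exact ho
        rw [← hJdef, Int.odd_mul] at hJodd
        obtain ⟨β, hβ⟩ := hJodd.1
        left
        exact ⟨v + 2*h₂, -h₂, ⟨l + h₂, by omega⟩, ⟨-β - 1, by omega⟩, by omega, by omega⟩
      · -- h₁ odd: contradiction
        exfalso
        have : Odd (h₁*(k+l+1)) := h₁odd.mul he'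
        obtain ⟨r, hr⟩ := this
        have hP2 : u^2 + 7*v^2 - 40 = 16*(h₁*(k+l+1)) + 64*m - 32 := by
          linear_combination hP + (8*(k+l+1)) * hh₁
        rw [hP2] at h
        obtain ⟨c, hc⟩ := h
        omega
    · -- g odd: contradiction
      exfalso
      have : Odd (g*(k+l+1)) := hgodd.mul he'
      obtain ⟨r, hr⟩ := this
      rw [hP] at h
      obtain ⟨c, hc⟩ := h
      omega
  · -- k - l odd
    have hd'odd : Odd (k - l) := ⟨g, hg⟩
    have hP : u^2 + 7*v^2 - 40 = 8*((k-l)*(g+l+1)) + 64*m - 32 := by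
      linear_combination (u + 2*k + 1) * hk + 7*(v + 2*l + 1) * hl + (4*(k-l)) * hg + 32 * hm
    rcases Int.even_or_odd (g+l+1) with ⟨h₁, hh₁⟩ | he₂odd
    · rcases Int.even_or_odd h₁ with ⟨h₂, hh₂⟩ | h₁odd
      · -- u + v = 16 h₂
        have hP2 : u^2 + 7*v^2 - 40 = 32*((k-l)*h₂) + 64*m - 32 := by
          linear_combination hP + (8*(k-l)) * hh₁ + (16*(k-l)) * hh₂
        rw [hP2] at h
        obtain ⟨J, hJdef⟩ : ∃ J, (k-l)*h₂ = J := ⟨_, rfl⟩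
        rw [hJdef] at h
        have hJodd : Odd J := by
          rcases Int.even_or_odd J with ⟨r, hr⟩ | ho
          · exfalso; omega
          · exact ho
        rw [← hJdef, Int.odd_mul] at hJodd
        obtain ⟨β, hβ⟩ := hJodd.2
        right
        exact ⟨-v + 2*h₂, -h₂, ⟨h₂ - l - 1, by omega⟩, ⟨-β - 1, by omega⟩, by omega, by omega⟩
      · exfalso
        have : Odd ((k-l)*h₁) := hd'odd.mul h₁odd
        obtain ⟨r, hr⟩ := this
        have hP2 : u^2 + 7*v^2 - 40 = 16*((k-l)*h₁) + 64*m - 32 := by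
          linear_combination hP + (8*(k-l)) * hh₁
        rw [hP2] at h
        obtain ⟨c, hc⟩ := h
        omega
    · exfalso
      have : Odd ((k-l)*(g+l+1)) := hd'odd.mul he₂odd
      obtain ⟨r, hr⟩ := this
      rw [hP] at h
      obtain ⟨c, hc⟩ := h
      omega

def map1 (p : ℤ × ℤ × ℤ × ℤ) : ℤ × ℤ × ℤ × ℤ :=
  if (p.1 + p.2.1) % 2 = 0 then
    ((p.1 - 7*p.2.1 + 4)/2, (p.1 + p.2.1)/2, p.2.2.1, p.2.2.2)
  else
    ((p.1 + 7*p.2.1 - 3)/2, (p.2.1 - p.1 + 1)/2, p.2.2.1, p.2.2.2)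

lemma part1 (a b c n : ℤ) (ha : 0 < a) (hao : Odd a) (hb : 0 < b) (hc : 0 < c) :
    t4 a (7*a) (2*b) (2*c) (2*n + a) = t4 a (7*a) b c n := by
  unfold t4
  set S : Set (ℤ × ℤ × ℤ × ℤ) := {v : ℤ × ℤ × ℤ × ℤ |
    2 * n = a * (v.1 * (v.1 - 1)) + 7 * a * (v.2.1 * (v.2.1 - 1))
      + b * (v.2.2.1 * (v.2.2.1 - 1)) + c * (v.2.2.2 * (v.2.2.2 - 1))} with hSdef
  have himg : {v : ℤ × ℤ × ℤ × ℤ |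
      2 * (2 * n + a) = a * (v.1 * (v.1 - 1)) + 7 * a * (v.2.1 * (v.2.1 - 1))
        + 2 * b * (v.2.2.1 * (v.2.2.1 - 1)) + 2 * c * (v.2.2.2 * (v.2.2.2 - 1))}
      = map1 '' S := by
    ext ⟨X, Y, z, w⟩
    simp only [Set.mem_setOf_eq, Set.mem_image]
    constructor
    · intro hp
      obtain ⟨Z, hZ⟩ := tri_even z
      obtain ⟨W, hW⟩ := tri_even w
      have h16a : a * ((2*X-1)^2 + 7*(2*Y-1)^2) = 16*(n + a - b*Z - c*W) := by
        linear_combination (-4 : ℤ) * hp + (-8*b) * hZ + (-8*c) * hW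
      have h16 : (16:ℤ) ∣ ((2*X-1)^2 + 7*(2*Y-1)^2) :=
        odd_cancel16 hao ⟨n + a - b*Z - c*W, h16a⟩
      rcases key1 ⟨X-1, by ring⟩ ⟨Y-1, by ring⟩ h16 with
        ⟨s, t, hs, ht, hu2, hv2⟩ | ⟨s, t, hs, ht, hu2, hv2⟩
      · obtain ⟨σ, hσ'⟩ := hs
        obtain ⟨τ, hτ'⟩ := ht
        have hX : σ = 2*X + 7*τ + 2 := by omega
        have hY : Y = X + 4*τ + 2 := by omega
        subst hX hY
        refine ⟨(2*X + 7*τ + 2 + 1, τ + 1, z, w), ?_, ?_⟩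
        · simp only [hSdef, Set.mem_setOf_eq]
          refine mul_left_cancel₀ (show (2:ℤ) ≠ 0 by norm_num) ?_
          linear_combination hp
        · simp only [map1]
          rw [if_pos (by omega)]
          simp only [Prod.mk.injEq]
          exact ⟨by omega, by omega, trivial⟩
      · obtain ⟨σ, hσ'⟩ := hs
        obtain ⟨τ, hτ'⟩ := ht
        have hX : σ = 2*X - 7*τ - 5 := by omega
        have hY : Y = 4*τ - X + 3 := by omega
        subst hX hY
        refine ⟨(2*X - 7*τ - 5 + 1, τ + 1, z, w), ?_, ?_⟩
        · simp only [hSdef, Set.mem_setOf_eq]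
          refine mul_left_cancel₀ (show (2:ℤ) ≠ 0 by norm_num) ?_
          linear_combination hp
        · simp only [map1]
          rw [if_neg (by omega)]
          simp only [Prod.mk.injEq]
          exact ⟨by omega, by omega, trivial⟩
    · rintro ⟨⟨x, y, z', w'⟩, hv, heq⟩
      simp only [hSdef, Set.mem_setOf_eq] at hv
      by_cases hpar : (x + y) % 2 = 0
      · simp only [map1] at heq
        rw [if_pos (by exact hpar)] at heq
        simp only [Prod.mk.injEq] at heq
        obtain ⟨e1, e2, e3, e4⟩ := heq
        subst e3 e4
        obtain ⟨XX, hXX⟩ : ∃ XX, x - 7*y + 4 = 2*XX := ⟨(x - 7*y + 4)/2, by omega⟩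
        obtain ⟨YY, hYY⟩ : ∃ YY, x + y = 2*YY := ⟨(x + y)/2, by omega⟩
        have hX : X = XX := by omega
        have hY : Y = YY := by omega
        have hx : x = 2*XX + 7*y - 4 := by omega
        subst hX hY hx
        have hy : Y = X + 4*y - 2 := by omega
        subst hy
        linear_combination 2 * hv
      · simp only [map1] at heq
        rw [if_neg (by exact hpar)] at heq
        simp only [Prod.mk.injEq] at heq
        obtain ⟨e1, e2, e3, e4⟩ := heq
        subst e3 e4
        obtain ⟨XX, hXX⟩ : ∃ XX, x + 7*y - 3 = 2*XX := ⟨(x + 7*y - 3)/2, by omega⟩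
        obtain ⟨YY, hYY⟩ : ∃ YY, y - x + 1 = 2*YY := ⟨(y - x + 1)/2, by omega⟩
        have hX : X = XX := by omega
        have hY : Y = YY := by omega
        have hx : x = 2*XX - 7*y + 3 := by omega
        subst hX hY hx
        have hy : Y = 4*y - X - 1 := by omega
        subst hy
        linear_combination 2 * hv
  have hinj : Set.InjOn map1 S := by
    rintro ⟨x, y, z, w⟩ hxm ⟨x', y', z', w'⟩ hym heq
    simp only [map1] at heq
    by_cases h1 : (x + y) % 2 = 0 <;> by_cases h2 : (x' + y') % 2 = 0
    · rw [if_pos h1, if_pos h2] at heq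
      simp only [Prod.mk.injEq] at heq
      simp only [Prod.mk.injEq]
      omega
    · rw [if_pos h1, if_neg h2] at heq
      simp only [Prod.mk.injEq] at heq
      simp only [Prod.mk.injEq]
      omega
    · rw [if_neg h1, if_pos h2] at heq
      simp only [Prod.mk.injEq] at heq
      simp only [Prod.mk.injEq]
      omega
    · rw [if_neg h1, if_neg h2] at heq
      simp only [Prod.mk.injEq] at heq
      simp only [Prod.mk.injEq]
      omega
  rw [himg, Set.ncard_image_of_injOn hinj]

def mapA2 (p : ℤ × ℤ × ℤ × ℤ) : ℤ × ℤ × ℤ × ℤ :=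
  (2*p.1 + 7*p.2.1 - 4, 2*p.1 - p.2.1, p.2.2.1, p.2.2.2)

def mapB2 (p : ℤ × ℤ × ℤ × ℤ) : ℤ × ℤ × ℤ × ℤ :=
  (2*p.1 + 7*p.2.1 - 4, p.2.1 - 2*p.1 + 1, p.2.2.1, p.2.2.2)

lemma part2 (a b c n : ℤ) (ha : 0 < a) (hao : Odd a) (hb : 0 < b) (hc : 0 < c) :
    t4 a (7*a) (8*b) (8*c) (8*n + 10*a) = 2 * t4 (4*a) (7*a) b c n := by
  unfold t4
  set S : Set (ℤ × ℤ × ℤ × ℤ) := {v : ℤ × ℤ × ℤ × ℤ |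
    2 * n = 4 * a * (v.1 * (v.1 - 1)) + 7 * a * (v.2.1 * (v.2.1 - 1))
      + b * (v.2.2.1 * (v.2.2.1 - 1)) + c * (v.2.2.2 * (v.2.2.2 - 1))} with hSdef
  have himg : {v : ℤ × ℤ × ℤ × ℤ |
      2 * (8 * n + 10 * a) = a * (v.1 * (v.1 - 1)) + 7 * a * (v.2.1 * (v.2.1 - 1))
        + 8 * b * (v.2.2.1 * (v.2.2.1 - 1)) + 8 * c * (v.2.2.2 * (v.2.2.2 - 1))}
      = mapA2 '' S ∪ mapB2 '' S := by
    ext ⟨X, Y, z, w⟩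
    simp only [Set.mem_setOf_eq, Set.mem_union, Set.mem_image]
    constructor
    · intro hp
      obtain ⟨Z, hZ⟩ := tri_even z
      obtain ⟨W, hW⟩ := tri_even w
      have h64a : a * ((2*X-1)^2 + 7*(2*Y-1)^2 - 24) = 64*(n + a - b*Z - c*W) := by
        linear_combination (-4 : ℤ) * hp + (-32*b) * hZ + (-32*c) * hW
      have h64 : (64:ℤ) ∣ ((2*X-1)^2 + 7*(2*Y-1)^2 - 24) :=
        odd_cancel64 hao ⟨n + a - b*Z - c*W, h64a⟩
      rcases key2 ⟨X-1, by ring⟩ ⟨Y-1, by ring⟩ h64 with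
        ⟨s, t, hs, ht, hu2, hv2⟩ | ⟨s, t, hs, ht, hu2, hv2⟩
      · obtain ⟨σ, hσ'⟩ := hs
        obtain ⟨τ, hτ'⟩ := ht
        have hX : X = 2*σ + 7*τ + 5 := by omega
        have hY : Y = 2*σ - τ + 1 := by omega
        subst hX hY
        left
        refine ⟨(σ + 1, τ + 1, z, w), ?_, ?_⟩
        · simp only [hSdef, Set.mem_setOf_eq]
          refine mul_left_cancel₀ (show (8:ℤ) ≠ 0 by norm_num) ?_
          linear_combination hp
        · simp only [mapA2, Prod.mk.injEq]
          exact ⟨by omega, by omega, trivial⟩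
      · obtain ⟨σ, hσ'⟩ := hs
        obtain ⟨τ, hτ'⟩ := ht
        have hX : X = 2*σ + 7*τ + 5 := by omega
        have hY : Y = τ - 2*σ := by omega
        subst hX hY
        right
        refine ⟨(σ + 1, τ + 1, z, w), ?_, ?_⟩
        · simp only [hSdef, Set.mem_setOf_eq]
          refine mul_left_cancel₀ (show (8:ℤ) ≠ 0 by norm_num) ?_
          linear_combination hp
        · simp only [mapB2, Prod.mk.injEq]
          exact ⟨by omega, by omega, trivial⟩
    · rintro (⟨⟨x, y, z', w'⟩, hv, heq⟩ | ⟨⟨x, y, z', w'⟩, hv, heq⟩) <;>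
        simp only [hSdef, Set.mem_setOf_eq] at hv <;>
        [(simp only [mapA2, Prod.mk.injEq] at heq); (simp only [mapB2, Prod.mk.injEq] at heq)] <;>
        obtain ⟨e1, e2, e3, e4⟩ := heq <;> subst e3 e4 <;>
        [(have hX : X = 2*x + 7*y - 4 := by omega); (have hX : X = 2*x + 7*y - 4 := by omega)] <;>
        [(have hY : Y = 2*x - y := by omega); (have hY : Y = y - 2*x + 1 := by omega)] <;>
        subst hX hY <;> linear_combination 8 * hv
  have hinjA : Set.InjOn mapA2 S := by
    rintro ⟨x, y, z, w⟩ _ ⟨x', y', z', w'⟩ _ heq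
    simp only [mapA2, Prod.mk.injEq] at heq
    simp only [Prod.mk.injEq]
    omega
  have hinjB : Set.InjOn mapB2 S := by
    rintro ⟨x, y, z, w⟩ _ ⟨x', y', z', w'⟩ _ heq
    simp only [mapB2, Prod.mk.injEq] at heq
    simp only [Prod.mk.injEq]
    omega
  have hdisj : Disjoint (mapA2 '' S) (mapB2 '' S) := by
    rw [Set.disjoint_left]
    rintro p ⟨⟨x, y, z, w⟩, -, rfl⟩ ⟨⟨x', y', z', w'⟩, -, heq⟩
    simp only [mapA2, mapB2, Prod.mk.injEq] at heq
    omega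
  have hfin : S.Finite := by
    rw [hSdef]
    exact sol_finite (4*a) (7*a) b c n (by linarith) (by linarith) hb hc
  rw [himg, Set.ncard_union_eq hdisj (hfin.image _) (hfin.image _),
    Set.ncard_image_of_injOn hinjA, Set.ncard_image_of_injOn hinjB]
  omega

def mapA3 (p : ℤ × ℤ × ℤ × ℤ) : ℤ × ℤ × ℤ × ℤ :=
  (p.1 - 14*p.2.1 + 7, p.1 + 2*p.2.1 - 1, p.2.2.1, p.2.2.2)

def mapB3 (p : ℤ × ℤ × ℤ × ℤ) : ℤ × ℤ × ℤ × ℤ :=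
  (p.1 - 14*p.2.1 + 7, 2 - p.1 - 2*p.2.1, p.2.2.1, p.2.2.2)

lemma part3 (a b c n : ℤ) (ha : 0 < a) (hao : Odd a) (hb : 0 < b) (hc : 0 < c) :
    t4 a (7*a) (8*b) (8*c) (8*n + 28*a) = 2 * t4 a (28*a) b c n := by
  unfold t4
  set S : Set (ℤ × ℤ × ℤ × ℤ) := {v : ℤ × ℤ × ℤ × ℤ |
    2 * n = a * (v.1 * (v.1 - 1)) + 28 * a * (v.2.1 * (v.2.1 - 1))
      + b * (v.2.2.1 * (v.2.2.1 - 1)) + c * (v.2.2.2 * (v.2.2.2 - 1))} with hSdef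
  have himg : {v : ℤ × ℤ × ℤ × ℤ |
      2 * (8 * n + 28 * a) = a * (v.1 * (v.1 - 1)) + 7 * a * (v.2.1 * (v.2.1 - 1))
        + 8 * b * (v.2.2.1 * (v.2.2.1 - 1)) + 8 * c * (v.2.2.2 * (v.2.2.2 - 1))}
      = mapA3 '' S ∪ mapB3 '' S := by
    ext ⟨X, Y, z, w⟩
    simp only [Set.mem_setOf_eq, Set.mem_union, Set.mem_image]
    constructor
    · intro hp
      obtain ⟨Z, hZ⟩ := tri_even z
      obtain ⟨W, hW⟩ := tri_even w
      have h64a : a * ((2*X-1)^2 + 7*(2*Y-1)^2 - 40) = 64*(n + 3*a - b*Z - c*W) := by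
        linear_combination (-4 : ℤ) * hp + (-32*b) * hZ + (-32*c) * hW
      have h64 : (64:ℤ) ∣ ((2*X-1)^2 + 7*(2*Y-1)^2 - 40) :=
        odd_cancel64 hao ⟨n + 3*a - b*Z - c*W, h64a⟩
      rcases key3 ⟨X-1, by ring⟩ ⟨Y-1, by ring⟩ h64 with
        ⟨s, t, hs, ht, hu2, hv2⟩ | ⟨s, t, hs, ht, hu2, hv2⟩
      · obtain ⟨σ, hσ'⟩ := hs
        obtain ⟨τ, hτ'⟩ := ht
        have hX : X = σ - 14*τ - 6 := by omega
        have hY : Y = σ + 2*τ + 2 := by omega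
        subst hX hY
        left
        refine ⟨(σ + 1, τ + 1, z, w), ?_, ?_⟩
        · simp only [hSdef, Set.mem_setOf_eq]
          refine mul_left_cancel₀ (show (8:ℤ) ≠ 0 by norm_num) ?_
          linear_combination hp
        · simp only [mapA3, Prod.mk.injEq]
          exact ⟨by omega, by omega, trivial⟩
      · obtain ⟨σ, hσ'⟩ := hs
        obtain ⟨τ, hτ'⟩ := ht
        have hX : X = σ - 14*τ - 6 := by omega
        have hY : Y = -σ - 2*τ - 1 := by omega
        subst hX hY
        right
        refine ⟨(σ + 1, τ + 1, z, w), ?_, ?_⟩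
        · simp only [hSdef, Set.mem_setOf_eq]
          refine mul_left_cancel₀ (show (8:ℤ) ≠ 0 by norm_num) ?_
          linear_combination hp
        · simp only [mapB3, Prod.mk.injEq]
          exact ⟨by omega, by omega, trivial⟩
    · rintro (⟨⟨x, y, z', w'⟩, hv, heq⟩ | ⟨⟨x, y, z', w'⟩, hv, heq⟩) <;>
        simp only [hSdef, Set.mem_setOf_eq] at hv <;>
        [(simp only [mapA3, Prod.mk.injEq] at heq); (simp only [mapB3, Prod.mk.injEq] at heq)] <;>
        obtain ⟨e1, e2, e3, e4⟩ := heq <;> subst e3 e4 <;>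
        [(have hX : X = x - 14*y + 7 := by omega); (have hX : X = x - 14*y + 7 := by omega)] <;>
        [(have hY : Y = x + 2*y - 1 := by omega); (have hY : Y = 2 - x - 2*y := by omega)] <;>
        subst hX hY <;> linear_combination 8 * hv
  have hinjA : Set.InjOn mapA3 S := by
    rintro ⟨x, y, z, w⟩ _ ⟨x', y', z', w'⟩ _ heq
    simp only [mapA3, Prod.mk.injEq] at heq
    simp only [Prod.mk.injEq]
    omega
  have hinjB : Set.InjOn mapB3 S := by
    rintro ⟨x, y, z, w⟩ _ ⟨x', y', z', w'⟩ _ heq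
    simp only [mapB3, Prod.mk.injEq] at heq
    simp only [Prod.mk.injEq]
    omega
  have hdisj : Disjoint (mapA3 '' S) (mapB3 '' S) := by
    rw [Set.disjoint_left]
    rintro p ⟨⟨x, y, z, w⟩, -, rfl⟩ ⟨⟨x', y', z', w'⟩, -, heq⟩
    simp only [mapA3, mapB3, Prod.mk.injEq] at heq
    omega
  have hfin : S.Finite := by
    rw [hSdef]
    exact sol_finite a (28*a) b c n ha (by linarith) hb hc
  rw [himg, Set.ncard_union_eq hdisj (hfin.image _) (hfin.image _),
    Set.ncard_image_of_injOn hinjA, Set.ncard_image_of_injOn hinjB]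
  omega

theorem stmt16 (a b c n : ℤ) (ha : 0 < a) (hao : Odd a) (hb : 0 < b) (hc : 0 < c)
    (hn : 0 ≤ n) :
    t4 a (7*a) (2*b) (2*c) (2*n + a) = t4 a (7*a) b c n ∧
    t4 a (7*a) (8*b) (8*c) (8*n + 10*a) = 2 * t4 (4*a) (7*a) b c n ∧
    t4 a (7*a) (8*b) (8*c) (8*n + 28*a) = 2 * t4 a (28*a) b c n :=
  ⟨part1 a b c n ha hao hb hc, part2 a b c n ha hao hb hc, part3 a b c n ha hao hb hc⟩
end

section
/- For positive integers a, b, c with a odd, and any nonnegative integer n: t(3a,5a,2b,2c; 2n+3a) = t(a,15a,b,c;n) and t(a,15a,2b,2c; 2n) = t(3a,5a,b,c;n). -/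
lemma coprime16 {a X : ℤ} (ha : Odd a) (h : (16:ℤ) ∣ a * X) : (16:ℤ) ∣ X := by
  have hnd : ¬ (2:ℤ) ∣ a := by
    obtain ⟨j, rfl⟩ := ha; rintro ⟨k, hk⟩; omega
  have hc : IsCoprime (2:ℤ) a := (Int.prime_two.irreducible.coprime_iff_not_dvd).mpr hnd
  have hc16 : IsCoprime (16:ℤ) a := by
    have := hc.pow_left (m := 4); norm_num at this; exact this
  exact hc16.dvd_of_dvd_mul_left h

lemma odd_sq {z : ℤ} (hz : Odd z) : ∃ h, z^2 = 8*h+1 := by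
  obtain ⟨t, rfl⟩ := hz
  obtain ⟨e, he⟩ := Int.even_mul_succ_self t
  exact ⟨e, by linear_combination 4*he⟩

lemma key_mod1 {u v : ℤ} (hu : Odd u) (hv : Odd v) (h : (16:ℤ) ∣ 3*u^2+5*v^2) :
    (u-v) % 8 = 4 ∨ (u+v) % 8 = 4 := by
  have hu2 : u % 2 = 1 := Int.odd_iff.mp hu
  have hv2 : v % 2 = 1 := Int.odd_iff.mp hv
  obtain ⟨k, hk⟩ := h
  obtain ⟨q1, r, hqr1, hr0, hr8⟩ : ∃ q r, u = 8*q + r ∧ 0 ≤ r ∧ r < 8 :=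
    ⟨u/8, u%8, by omega, by omega, by omega⟩
  obtain ⟨q2, s, hqr2, hs0, hs8⟩ : ∃ q s, v = 8*q + s ∧ 0 ≤ s ∧ s < 8 :=
    ⟨v/8, v%8, by omega, by omega, by omega⟩
  have hk1 : u^2 - r^2 = 16*(4*q1^2 + q1*r) := by rw [hqr1]; ring
  have hk2 : v^2 - s^2 = 16*(4*q2^2 + q2*s) := by rw [hqr2]; ring
  have hkey : ∃ K, 3*(r*r) + 5*(s*s) = 16*K :=
    ⟨k - 3*(4*q1^2+q1*r) - 5*(4*q2^2+q2*s), by linear_combination hk - 3*hk1 - 5*hk2⟩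
  obtain ⟨K, hkey⟩ := hkey
  clear hk hk1 hk2 hu hv
  interval_cases r <;> interval_cases s <;> omega

lemma key_mod2 {u v : ℤ} (hu : Odd u) (hv : Odd v) (h : (16:ℤ) ∣ u^2+15*v^2) :
    (u-v) % 8 = 0 ∨ (u+v) % 8 = 0 := by
  have hu2 : u % 2 = 1 := Int.odd_iff.mp hu
  have hv2 : v % 2 = 1 := Int.odd_iff.mp hv
  obtain ⟨k, hk⟩ := h
  obtain ⟨q1, r, hqr1, hr0, hr8⟩ : ∃ q r, u = 8*q + r ∧ 0 ≤ r ∧ r < 8 :=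
    ⟨u/8, u%8, by omega, by omega, by omega⟩
  obtain ⟨q2, s, hqr2, hs0, hs8⟩ : ∃ q s, v = 8*q + s ∧ 0 ≤ s ∧ s < 8 :=
    ⟨v/8, v%8, by omega, by omega, by omega⟩
  have hk1 : u^2 - r^2 = 16*(4*q1^2 + q1*r) := by rw [hqr1]; ring
  have hk2 : v^2 - s^2 = 16*(4*q2^2 + q2*s) := by rw [hqr2]; ring
  have hkey : ∃ K, (r*r) + 15*(s*s) = 16*K :=
    ⟨k - (4*q1^2+q1*r) - 15*(4*q2^2+q2*s), by linear_combination hk - hk1 - 15*hk2⟩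
  obtain ⟨K, hkey⟩ := hkey
  clear hk hk1 hk2 hu hv
  interval_cases r <;> interval_cases s <;> omega

def OddSol (A B C D m : ℤ) : Set (ℤ × ℤ × ℤ × ℤ) :=
  {v | Odd v.1 ∧ Odd v.2.1 ∧ Odd v.2.2.1 ∧ Odd v.2.2.2 ∧
    A * v.1^2 + B * v.2.1^2 + C * v.2.2.1^2 + D * v.2.2.2^2 = m}

def Fmap1 : ℤ×ℤ×ℤ×ℤ → ℤ×ℤ×ℤ×ℤ := fun x =>
  if (x.1 - x.2.1) % 4 = 0 then ((3*x.1+5*x.2.1)/4, (x.1-x.2.1)/4, x.2.2)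
  else ((3*x.1-5*x.2.1)/4, (-x.1-x.2.1)/4, x.2.2)

def Gmap1 : ℤ×ℤ×ℤ×ℤ → ℤ×ℤ×ℤ×ℤ := fun x =>
  if (x.1 - x.2.1) % 4 = 0 then ((x.1+5*x.2.1)/2, (x.1-3*x.2.1)/2, x.2.2)
  else ((x.1-5*x.2.1)/2, (-x.1-3*x.2.1)/2, x.2.2)

lemma Fmap1_eq1 {u v : ℤ} (z w : ℤ) {k : ℤ} (hk : u = v + 8*k + 4) :
    Fmap1 (u,v,z,w) = (2*v+6*k+3, 2*k+1, z, w) := by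
  have hd : (u - v) % 4 = 0 := by omega
  have h1 : (3*u+5*v)/4 = 2*v+6*k+3 := by omega
  have h2 : (u-v)/4 = 2*k+1 := by omega
  simp only [Fmap1]
  rw [if_pos hd, h1, h2]

lemma Fmap1_eq2 {u v : ℤ} (z w : ℤ) {k : ℤ} (hv : Odd v) (hk : u = -v + 8*k + 4) :
    Fmap1 (u,v,z,w) = (-2*v+6*k+3, -2*k-1, z, w) := by
  have hv2 : v % 2 = 1 := Int.odd_iff.mp hv
  have hd : ¬ (u - v) % 4 = 0 := by omega
  have h1 : (3*u-5*v)/4 = -2*v+6*k+3 := by omega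
  have h2 : (-u-v)/4 = -2*k-1 := by omega
  simp only [Fmap1]
  rw [if_neg hd, h1, h2]

lemma Gmap1_eq1 {U V : ℤ} (z w : ℤ) {k : ℤ} (hk : U = V + 4*k) :
    Gmap1 (U,V,z,w) = (3*V+2*k, 2*k-V, z, w) := by
  have hd : (U - V) % 4 = 0 := by omega
  have h1 : (U+5*V)/2 = 3*V+2*k := by omega
  have h2 : (U-3*V)/2 = 2*k-V := by omega
  simp only [Gmap1]
  rw [if_pos hd, h1, h2]

lemma Gmap1_eq2 {U V : ℤ} (z w : ℤ) {k : ℤ} (hk : U = V + 4*k + 2) :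
    Gmap1 (U,V,z,w) = (2*k+1-2*V, -2*V-2*k-1, z, w) := by
  have hd : ¬ (U - V) % 4 = 0 := by omega
  have h1 : (U-5*V)/2 = 2*k+1-2*V := by omega
  have h2 : (-U-3*V)/2 = -2*V-2*k-1 := by omega
  simp only [Gmap1]
  rw [if_neg hd, h1, h2]

lemma count1 (a b c n : ℤ) (ha : Odd a) :
    (OddSol (3*a) (5*a) (2*b) (2*c) (16*n+32*a+2*b+2*c)).ncard
      = (OddSol a (15*a) b c (8*n+16*a+b+c)).ncard := by
  have hF : Set.MapsTo Fmap1 (OddSol (3*a) (5*a) (2*b) (2*c) (16*n+32*a+2*b+2*c))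
      (OddSol a (15*a) b c (8*n+16*a+b+c)) := by
    rintro ⟨u,v,z,w⟩ ⟨hu,hv,hz,hw,heq⟩
    dsimp only at hu hv hz hw heq
    obtain ⟨h1, hz2⟩ := odd_sq hz
    obtain ⟨h2, hw2⟩ := odd_sq hw
    have h16 : (16:ℤ) ∣ 3*u^2+5*v^2 := coprime16 ha
      ⟨n+2*a-b*h1-c*h2, by linear_combination heq - 2*b*hz2 - 2*c*hw2⟩
    rcases key_mod1 hu hv h16 with h4 | h4
    · obtain ⟨k, hk⟩ : ∃ k, u = v + 8*k + 4 := ⟨(u-v-4)/8, by omega⟩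
      rw [Fmap1_eq1 z w hk]
      subst hk
      obtain ⟨t, rfl⟩ := hv
      refine ⟨⟨2*t+3*k+2, by ring⟩, ⟨k, rfl⟩, hz, hw, ?_⟩
      dsimp only
      have hg : 2*(a*(2*(2*t+1)+6*k+3)^2 + 15*a*(2*k+1)^2 + b*z^2 + c*w^2)
          = 2*(8*n+16*a+b+c) := by linear_combination heq
      linarith
    · obtain ⟨k, hk⟩ : ∃ k, u = -v + 8*k + 4 := ⟨(u+v-4)/8, by omega⟩
      rw [Fmap1_eq2 z w hv hk]
      subst hk
      obtain ⟨t, rfl⟩ := hv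
      refine ⟨⟨-2*t+3*k, by ring⟩, ⟨-k-1, by ring⟩, hz, hw, ?_⟩
      dsimp only
      have hg : 2*(a*(-2*(2*t+1)+6*k+3)^2 + 15*a*(-2*k-1)^2 + b*z^2 + c*w^2)
          = 2*(8*n+16*a+b+c) := by linear_combination heq
      linarith
  have hG : Set.MapsTo Gmap1 (OddSol a (15*a) b c (8*n+16*a+b+c))
      (OddSol (3*a) (5*a) (2*b) (2*c) (16*n+32*a+2*b+2*c)) := by
    rintro ⟨U,V,z,w⟩ ⟨hU,hV,hz,hw,heq⟩
    dsimp only at hU hV hz hw heq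
    have hU2 : U % 2 = 1 := Int.odd_iff.mp hU
    have hV2 : V % 2 = 1 := Int.odd_iff.mp hV
    by_cases hd : (U - V) % 4 = 0
    · obtain ⟨k, hk⟩ : ∃ k, U = V + 4*k := ⟨(U-V)/4, by omega⟩
      rw [Gmap1_eq1 z w hk]
      subst hk
      obtain ⟨t, rfl⟩ := hV
      refine ⟨⟨3*t+k+1, by ring⟩, ⟨k-t-1, by ring⟩, hz, hw, ?_⟩
      dsimp only
      linear_combination 2*heq
    · obtain ⟨k, hk⟩ : ∃ k, U = V + 4*k + 2 := ⟨(U-V-2)/4, by omega⟩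
      rw [Gmap1_eq2 z w hk]
      subst hk
      obtain ⟨t, rfl⟩ := hV
      refine ⟨⟨k-2*t-1, by ring⟩, ⟨-2*t-k-2, by ring⟩, hz, hw, ?_⟩
      dsimp only
      linear_combination 2*heq
  have hleft : Set.LeftInvOn Gmap1 Fmap1 (OddSol (3*a) (5*a) (2*b) (2*c) (16*n+32*a+2*b+2*c)) := by
    rintro ⟨u,v,z,w⟩ ⟨hu,hv,hz,hw,heq⟩
    dsimp only at hu hv hz hw heq
    obtain ⟨h1, hz2⟩ := odd_sq hz
    obtain ⟨h2, hw2⟩ := odd_sq hw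
    have h16 : (16:ℤ) ∣ 3*u^2+5*v^2 := coprime16 ha
      ⟨n+2*a-b*h1-c*h2, by linear_combination heq - 2*b*hz2 - 2*c*hw2⟩
    rcases key_mod1 hu hv h16 with h4 | h4
    · obtain ⟨k, hk⟩ : ∃ k, u = v + 8*k + 4 := ⟨(u-v-4)/8, by omega⟩
      obtain ⟨t, rfl⟩ := hv
      rw [Fmap1_eq1 z w hk,
        Gmap1_eq1 z w (k := t+k+1) (by ring)]
      simp only [Prod.mk.injEq, and_true]
      omega
    · obtain ⟨k, hk⟩ : ∃ k, u = -v + 8*k + 4 := ⟨(u+v-4)/8, by omega⟩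
      obtain ⟨t, rfl⟩ := hv
      rw [Fmap1_eq2 z w ⟨t, rfl⟩ hk,
        Gmap1_eq2 z w (k := 2*k-t) (by ring)]
      simp only [Prod.mk.injEq, and_true]
      omega
  have hright : Set.RightInvOn Gmap1 Fmap1 (OddSol a (15*a) b c (8*n+16*a+b+c)) := by
    rintro ⟨U,V,z,w⟩ ⟨hU,hV,hz,hw,heq⟩
    dsimp only at hU hV hz hw heq
    have hU2 : U % 2 = 1 := Int.odd_iff.mp hU
    have hV2 : V % 2 = 1 := Int.odd_iff.mp hV
    by_cases hd : (U - V) % 4 = 0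
    · obtain ⟨k, hk⟩ : ∃ k, U = V + 4*k := ⟨(U-V)/4, by omega⟩
      obtain ⟨q, rfl⟩ := hV
      rw [Gmap1_eq1 z w hk,
        Fmap1_eq1 z w (u := 3*(2*q+1)+2*k) (v := 2*k-(2*q+1)) (k := q) (by ring)]
      simp only [Prod.mk.injEq, and_true]
      omega
    · obtain ⟨k, hk⟩ : ∃ k, U = V + 4*k + 2 := ⟨(U-V-2)/4, by omega⟩
      obtain ⟨q, rfl⟩ := hV
      rw [Gmap1_eq2 z w hk,
        Fmap1_eq2 z w (u := 2*k+1-2*(2*q+1)) (v := -2*(2*q+1)-2*k-1) (k := -q-1)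
          ⟨-2*q-k-2, by ring⟩ (by ring)]
      simp only [Prod.mk.injEq, and_true]
      omega
  have hbij : Set.BijOn Fmap1 (OddSol (3*a) (5*a) (2*b) (2*c) (16*n+32*a+2*b+2*c))
      (OddSol a (15*a) b c (8*n+16*a+b+c)) := Set.InvOn.bijOn ⟨hleft, hright⟩ hF hG
  rw [← hbij.image_eq]
  exact (Set.ncard_image_of_injOn hbij.injOn).symm

def Fmap2 : ℤ×ℤ×ℤ×ℤ → ℤ×ℤ×ℤ×ℤ := fun x =>
  if (x.1 + x.2.1) % 4 = 0 then ((x.1+5*x.2.1)/4, (x.1-3*x.2.1)/4, x.2.2)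
  else ((x.1-5*x.2.1)/4, (-x.1-3*x.2.1)/4, x.2.2)

def Gmap2 : ℤ×ℤ×ℤ×ℤ → ℤ×ℤ×ℤ×ℤ := fun x =>
  if (x.1 + x.2.1) % 4 = 0 then ((3*x.1+5*x.2.1)/2, (x.1-x.2.1)/2, x.2.2)
  else ((3*x.1-5*x.2.1)/2, (-x.1-x.2.1)/2, x.2.2)

lemma Fmap2_eq1 {U V : ℤ} (z w : ℤ) {k : ℤ} (hk : U = -V + 8*k) :
    Fmap2 (U,V,z,w) = (V+2*k, 2*k-V, z, w) := by
  have hd : (U + V) % 4 = 0 := by omega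
  have h1 : (U+5*V)/4 = V+2*k := by omega
  have h2 : (U-3*V)/4 = 2*k-V := by omega
  simp only [Fmap2]
  rw [if_pos hd, h1, h2]

lemma Fmap2_eq2 {U V : ℤ} (z w : ℤ) {k : ℤ} (hV : Odd V) (hk : U = V + 8*k) :
    Fmap2 (U,V,z,w) = (2*k-V, -2*k-V, z, w) := by
  have hV2 : V % 2 = 1 := Int.odd_iff.mp hV
  have hd : ¬ (U + V) % 4 = 0 := by omega
  have h1 : (U-5*V)/4 = 2*k-V := by omega
  have h2 : (-U-3*V)/4 = -2*k-V := by omega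
  simp only [Fmap2]
  rw [if_neg hd, h1, h2]

lemma Gmap2_eq1 {u v : ℤ} (z w : ℤ) {k : ℤ} (hk : u = -v + 4*k) :
    Gmap2 (u,v,z,w) = (v+6*k, 2*k-v, z, w) := by
  have hd : (u + v) % 4 = 0 := by omega
  have h1 : (3*u+5*v)/2 = v+6*k := by omega
  have h2 : (u-v)/2 = 2*k-v := by omega
  simp only [Gmap2]
  rw [if_pos hd, h1, h2]

lemma Gmap2_eq2 {u v : ℤ} (z w : ℤ) {k : ℤ} (hv : Odd v) (hk : u = v + 4*k) :
    Gmap2 (u,v,z,w) = (6*k-v, -v-2*k, z, w) := by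
  have hv2 : v % 2 = 1 := Int.odd_iff.mp hv
  have hd : ¬ (u + v) % 4 = 0 := by omega
  have h1 : (3*u-5*v)/2 = 6*k-v := by omega
  have h2 : (-u-v)/2 = -v-2*k := by omega
  simp only [Gmap2]
  rw [if_neg hd, h1, h2]

lemma count2 (a b c n : ℤ) (ha : Odd a) :
    (OddSol a (15*a) (2*b) (2*c) (16*n+16*a+2*b+2*c)).ncard
      = (OddSol (3*a) (5*a) b c (8*n+8*a+b+c)).ncard := by
  have hF : Set.MapsTo Fmap2 (OddSol a (15*a) (2*b) (2*c) (16*n+16*a+2*b+2*c))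
      (OddSol (3*a) (5*a) b c (8*n+8*a+b+c)) := by
    rintro ⟨U,V,z,w⟩ ⟨hU,hV,hz,hw,heq⟩
    dsimp only at hU hV hz hw heq
    obtain ⟨h1, hz2⟩ := odd_sq hz
    obtain ⟨h2, hw2⟩ := odd_sq hw
    have h16 : (16:ℤ) ∣ U^2+15*V^2 := coprime16 ha
      ⟨n+a-b*h1-c*h2, by linear_combination heq - 2*b*hz2 - 2*c*hw2⟩
    rcases key_mod2 hU hV h16 with h4 | h4
    · obtain ⟨k, hk⟩ : ∃ k, U = V + 8*k := ⟨(U-V)/8, by omega⟩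
      rw [Fmap2_eq2 z w hV hk]
      subst hk
      obtain ⟨t, rfl⟩ := hV
      refine ⟨⟨k-t-1, by ring⟩, ⟨-k-t-1, by ring⟩, hz, hw, ?_⟩
      dsimp only
      have hg : 2*(3*a*(2*k-(2*t+1))^2 + 5*a*(-2*k-(2*t+1))^2 + b*z^2 + c*w^2)
          = 2*(8*n+8*a+b+c) := by linear_combination heq
      linarith
    · obtain ⟨k, hk⟩ : ∃ k, U = -V + 8*k := ⟨(U+V)/8, by omega⟩
      rw [Fmap2_eq1 z w hk]
      subst hk
      obtain ⟨t, rfl⟩ := hV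
      refine ⟨⟨t+k, by ring⟩, ⟨k-t-1, by ring⟩, hz, hw, ?_⟩
      dsimp only
      have hg : 2*(3*a*((2*t+1)+2*k)^2 + 5*a*(2*k-(2*t+1))^2 + b*z^2 + c*w^2)
          = 2*(8*n+8*a+b+c) := by linear_combination heq
      linarith
  have hG : Set.MapsTo Gmap2 (OddSol (3*a) (5*a) b c (8*n+8*a+b+c))
      (OddSol a (15*a) (2*b) (2*c) (16*n+16*a+2*b+2*c)) := by
    rintro ⟨u,v,z,w⟩ ⟨hu,hv,hz,hw,heq⟩
    dsimp only at hu hv hz hw heq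
    have hu2 : u % 2 = 1 := Int.odd_iff.mp hu
    have hv2 : v % 2 = 1 := Int.odd_iff.mp hv
    by_cases hd : (u + v) % 4 = 0
    · obtain ⟨k, hk⟩ : ∃ k, u = -v + 4*k := ⟨(u+v)/4, by omega⟩
      rw [Gmap2_eq1 z w hk]
      subst hk
      obtain ⟨t, rfl⟩ := hv
      refine ⟨⟨t+3*k, by ring⟩, ⟨k-t-1, by ring⟩, hz, hw, ?_⟩
      dsimp only
      linear_combination 2*heq
    · obtain ⟨k, hk⟩ : ∃ k, u = v + 4*k := ⟨(u-v)/4, by omega⟩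
      rw [Gmap2_eq2 z w hv hk]
      subst hk
      obtain ⟨t, rfl⟩ := hv
      refine ⟨⟨3*k-t-1, by ring⟩, ⟨-t-k-1, by ring⟩, hz, hw, ?_⟩
      dsimp only
      linear_combination 2*heq
  have hleft : Set.LeftInvOn Gmap2 Fmap2 (OddSol a (15*a) (2*b) (2*c) (16*n+16*a+2*b+2*c)) := by
    rintro ⟨U,V,z,w⟩ ⟨hU,hV,hz,hw,heq⟩
    dsimp only at hU hV hz hw heq
    obtain ⟨h1, hz2⟩ := odd_sq hz
    obtain ⟨h2, hw2⟩ := odd_sq hw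
    have h16 : (16:ℤ) ∣ U^2+15*V^2 := coprime16 ha
      ⟨n+a-b*h1-c*h2, by linear_combination heq - 2*b*hz2 - 2*c*hw2⟩
    rcases key_mod2 hU hV h16 with h4 | h4
    · obtain ⟨k, hk⟩ : ∃ k, U = V + 8*k := ⟨(U-V)/8, by omega⟩
      obtain ⟨t, rfl⟩ := hV
      rw [Fmap2_eq2 z w ⟨t, rfl⟩ hk,
        Gmap2_eq2 z w (v := -2*k-(2*t+1)) ⟨-k-t-1, by ring⟩ (k := k) (by ring)]
      simp only [Prod.mk.injEq, and_true]
      omega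
    · obtain ⟨k, hk⟩ : ∃ k, U = -V + 8*k := ⟨(U+V)/8, by omega⟩
      obtain ⟨t, rfl⟩ := hV
      rw [Fmap2_eq1 z w hk,
        Gmap2_eq1 z w (k := k) (by ring)]
      simp only [Prod.mk.injEq, and_true]
      omega
  have hright : Set.RightInvOn Gmap2 Fmap2 (OddSol (3*a) (5*a) b c (8*n+8*a+b+c)) := by
    rintro ⟨u,v,z,w⟩ ⟨hu,hv,hz,hw,heq⟩
    dsimp only at hu hv hz hw heq
    have hu2 : u % 2 = 1 := Int.odd_iff.mp hu
    have hv2 : v % 2 = 1 := Int.odd_iff.mp hv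
    by_cases hd : (u + v) % 4 = 0
    · obtain ⟨k, hk⟩ : ∃ k, u = -v + 4*k := ⟨(u+v)/4, by omega⟩
      obtain ⟨t, rfl⟩ := hv
      rw [Gmap2_eq1 z w hk,
        Fmap2_eq1 z w (k := k) (by ring)]
      simp only [Prod.mk.injEq, and_true]
      omega
    · obtain ⟨k, hk⟩ : ∃ k, u = v + 4*k := ⟨(u-v)/4, by omega⟩
      obtain ⟨t, rfl⟩ := hv
      rw [Gmap2_eq2 z w ⟨t, rfl⟩ hk,
        Fmap2_eq2 z w (V := -(2*t+1)-2*k) ⟨-t-k-1, by ring⟩ (k := k) (by ring)]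
      simp only [Prod.mk.injEq, and_true]
      omega
  have hbij : Set.BijOn Fmap2 (OddSol a (15*a) (2*b) (2*c) (16*n+16*a+2*b+2*c))
      (OddSol (3*a) (5*a) b c (8*n+8*a+b+c)) := Set.InvOn.bijOn ⟨hleft, hright⟩ hF hG
  rw [← hbij.image_eq]
  exact (Set.ncard_image_of_injOn hbij.injOn).symm

lemma t4_eq (A B C D m : ℤ) :
    t4 A B C D m = (OddSol A B C D (8*m + A + B + C + D)).ncard := by
  have he : Function.Injective
      (fun v : ℤ×ℤ×ℤ×ℤ => ((2*v.1-1, 2*v.2.1-1, 2*v.2.2.1-1, 2*v.2.2.2-1) : ℤ×ℤ×ℤ×ℤ)) := by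
    rintro ⟨x1,x2,x3,x4⟩ ⟨y1,y2,y3,y4⟩ h
    simp only [Prod.mk.injEq, Prod.ext_iff] at h ⊢
    omega
  have himg : (fun v : ℤ×ℤ×ℤ×ℤ => ((2*v.1-1, 2*v.2.1-1, 2*v.2.2.1-1, 2*v.2.2.2-1) : ℤ×ℤ×ℤ×ℤ)) ''
      {v : ℤ × ℤ × ℤ × ℤ |
        2 * m = A * (v.1 * (v.1 - 1)) + B * (v.2.1 * (v.2.1 - 1))
          + C * (v.2.2.1 * (v.2.2.1 - 1)) + D * (v.2.2.2 * (v.2.2.2 - 1))}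
      = OddSol A B C D (8*m + A + B + C + D) := by
    ext ⟨u1,u2,u3,u4⟩
    constructor
    · rintro ⟨⟨x1,x2,x3,x4⟩, hmem, heq⟩
      simp only [Set.mem_setOf_eq] at hmem
      simp only [Prod.mk.injEq] at heq
      obtain ⟨h1,h2,h3,h4⟩ := heq
      subst h1 h2 h3 h4
      exact ⟨⟨x1-1, by ring⟩, ⟨x2-1, by ring⟩, ⟨x3-1, by ring⟩, ⟨x4-1, by ring⟩,
        by linear_combination -4*hmem⟩
    · rintro ⟨⟨p,rfl⟩, ⟨q,rfl⟩, ⟨r,rfl⟩, ⟨s,rfl⟩, heq⟩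
      dsimp only at heq
      refine ⟨(p+1, q+1, r+1, s+1), ?_, by simp only [Prod.mk.injEq]; omega⟩
      simp only [Set.mem_setOf_eq]
      have h4 : 4*(2 * m) = 4*(A * ((p+1) * ((p+1) - 1)) + B * ((q+1) * ((q+1) - 1))
          + C * ((r+1) * ((r+1) - 1)) + D * ((s+1) * ((s+1) - 1))) := by linear_combination -heq
      linarith
  rw [t4, ← himg, Set.ncard_image_of_injective _ he]

theorem stmt17 (a b c n : ℤ) (ha : 0 < a) (hao : Odd a) (hb : 0 < b) (hc : 0 < c)
    (hn : 0 ≤ n) :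
    t4 (3*a) (5*a) (2*b) (2*c) (2*n + 3*a) = t4 a (15*a) b c n ∧
    t4 a (15*a) (2*b) (2*c) (2*n) = t4 (3*a) (5*a) b c n := by
  constructor
  · rw [t4_eq, t4_eq]
    rw [show 8*(2*n + 3*a) + 3*a + 5*a + 2*b + 2*c = 16*n+32*a+2*b+2*c from by ring,
        show 8*n + a + 15*a + b + c = 8*n+16*a+b+c from by ring]
    exact count1 a b c n hao
  · rw [t4_eq, t4_eq]
    rw [show 8*(2*n) + a + 15*a + 2*b + 2*c = 16*n+16*a+2*b+2*c from by ring,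
        show 8*n + 3*a + 5*a + b + c = 8*n+8*a+b+c from by ring]
    exact count2 a b c n hao
end
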